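/- arXiv:1504.02522 — 3 statements merged into one kernel-verified Lean document; each statement's English description precedes it below -/
import Mathlib

section
/- Let 0 → W → X → C → 0 and 0 → C → Y → Z → 0 be short exact sequences of cofinitely generated abelian groups. Then r_p(X) - r_p(Y) = r_p(W) - r_p(P) - r_p(Q), where P is the image of C[p] in W/pW under the connecting map (a subgroup of W/pW) and Q is the image of Y[p] in Z[p]. Here r_p(N) denotes the 𝔽_p-dimension of N[p]. -/
/-- The `p`-torsion subgroup `N[p]` of an abelian group `N`. -/
def pTors (p : ℕ) (N : Type*) [AddCommGroup N] : AddSubgroup N where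
  carrier := {x | p • x = 0}
  zero_mem' := smul_zero p
  add_mem' := by
    intro a b ha hb
    simp only [Set.mem_setOf_eq, smul_add] at *
    rw [ha, hb, add_zero]
  neg_mem' := by
    intro a ha
    simp only [Set.mem_setOf_eq, smul_neg] at *
    rw [ha, neg_zero]

/-- The `p`-rank `r_p(N) = dim_{𝔽_p} N[p]`: since `N[p]` is an elementary abelian
`p`-group, its `𝔽_p`-dimension is `log_p` of its cardinality. -/
noncomputable def pRank (p : ℕ) (N : Type*) [AddCommGroup N] : ℕ :=
  Nat.log p (Nat.card (pTors p N))

/-- Multiplication by `p` as an additive group homomorphism. -/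
def pMul (p : ℕ) (N : Type*) [AddCommGroup N] : N →+ N :=
  AddMonoidHom.mk' (fun x => p • x) fun a b => smul_add p a b

private lemma aux_card_ker_mul_card_range {G H : Type*} [AddCommGroup G] [AddCommGroup H]
    [Finite G] (φ : G →+ H) :
    Nat.card G = Nat.card φ.ker * Nat.card φ.range := by
  rw [AddSubgroup.card_eq_card_quotient_mul_card_addSubgroup φ.ker,
    Nat.card_congr (QuotientAddGroup.quotientKerEquivRange φ).toEquiv, mul_comm]

private lemma aux_card_pow (p : ℕ) [Fact p.Prime] (G : Type*) [AddCommGroup G] [Finite G]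
    (h : ∀ x : G, p • x = 0) : Nat.card G = p ^ Nat.log p (Nat.card G) := by
  have hfin : Finite (Multiplicative G) := Finite.of_equiv G Multiplicative.ofAdd
  have hpg : IsPGroup p (Multiplicative G) := by
    intro g
    refine ⟨1, Multiplicative.toAdd.injective ?_⟩
    rw [toAdd_pow, pow_one, toAdd_one]
    exact h g.toAdd
  obtain ⟨n, hn⟩ := IsPGroup.iff_card.mp hpg
  have hn' : Nat.card G = p ^ n := by
    rwa [Nat.card_congr Multiplicative.toAdd.symm] at hn
  rw [hn', Nat.log_pow (Fact.out : p.Prime).one_lt]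


/-- Given short exact sequences `0 → W → X → C → 0` and
`0 → C → Y → Z → 0` of cofinitely generated abelian groups, one has
`r_p(X) - r_p(Y) = r_p(W) - r_p(P) - r_p(Q)`, where `P` is the image of `C[p]` in
`W/pW` under the connecting map (concretely, the image in `W/pW` of
`{w : W | f w ∈ pX}`) and `Q` is the image of `Y[p]` in `Z[p]`. -/
theorem fine_selmer_rank_identity (p : ℕ) [Fact p.Prime]
    {W X C Y Z : Type*} [AddCommGroup W] [AddCommGroup X] [AddCommGroup C]
    [AddCommGroup Y] [AddCommGroup Z]
    (f : W →+ X) (g : X →+ C) (f' : C →+ Y) (g' : Y →+ Z)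
    (hf : Function.Injective f) (hfg : Function.Exact ⇑f ⇑g) (hg : Function.Surjective g)
    (hf' : Function.Injective f') (hfg' : Function.Exact ⇑f' ⇑g') (hg' : Function.Surjective g')
    -- cofinite generation: all `p`-torsion subgroups and `W/pW` are finite
    [Finite ↥(pTors p W)] [Finite ↥(pTors p X)] [Finite ↥(pTors p C)]
    [Finite ↥(pTors p Y)] [Finite ↥(pTors p Z)]
    [Finite (W ⧸ (pMul p W).range)] :
    (pRank p X : ℤ) - pRank p Y =
      (pRank p W : ℤ)
        - Nat.log p (Nat.card
            (⇑(QuotientAddGroup.mk' (pMul p W).range) '' {w : W | ∃ x : X, f w = p • x}))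
        - Nat.log p (Nat.card (⇑g' '' (pTors p Y : Set Y))) := by
  classical
  have hp1 : 1 < p := (Fact.out : p.Prime).one_lt
  -- membership in pW
  have hpW : ∀ w : W, w ∈ (pMul p W).range ↔ ∃ u : W, p • u = w := by
    intro w
    constructor
    · rintro ⟨u, hu⟩; exact ⟨u, hu⟩
    · rintro ⟨u, hu⟩; exact ⟨u, hu⟩
  -- restricted homs
  have hφmem : ∀ w : ↥(pTors p W), f w.1 ∈ pTors p X := by
    intro w
    show p • f w.1 = 0
    rw [← map_nsmul, w.2, map_zero]
  set φ : ↥(pTors p W) →+ ↥(pTors p X) :=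
    (f.comp (pTors p W).subtype).codRestrict (pTors p X) hφmem with hφdef
  have hγmem : ∀ x : ↥(pTors p X), g x.1 ∈ pTors p C := by
    intro x
    show p • g x.1 = 0
    rw [← map_nsmul, x.2, map_zero]
  set γ : ↥(pTors p X) →+ ↥(pTors p C) :=
    (g.comp (pTors p X).subtype).codRestrict (pTors p C) hγmem with hγdef
  have hφ'mem : ∀ c : ↥(pTors p C), f' c.1 ∈ pTors p Y := by
    intro c
    show p • f' c.1 = 0
    rw [← map_nsmul, c.2, map_zero]
  set φ' : ↥(pTors p C) →+ ↥(pTors p Y) :=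
    (f'.comp (pTors p C).subtype).codRestrict (pTors p Y) hφ'mem with hφ'def
  set γ' : ↥(pTors p Y) →+ Z := g'.comp (pTors p Y).subtype with hγ'def
  -- the connecting map
  have key : ∀ c : ↥(pTors p C), ∃ wx : W × X, g wx.2 = c.1 ∧ f wx.1 = p • wx.2 := by
    intro c
    obtain ⟨x, hx⟩ := hg c.1
    have h0 : g (p • x) = 0 := by rw [map_nsmul, hx]; exact c.2
    obtain ⟨w, hw⟩ := (hfg (p • x)).mp h0
    exact ⟨(w, x), hx, hw⟩
  set wsel : ↥(pTors p C) → W × X := fun c => Classical.choose (key c) with hwseldef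
  have hwsel : ∀ c, g (wsel c).2 = c.1 ∧ f (wsel c).1 = p • (wsel c).2 :=
    fun c => Classical.choose_spec (key c)
  have hmkeq : ∀ (w₁ w₂ : W) (x₁ x₂ : X), f w₁ = p • x₁ → f w₂ = p • x₂ → g x₁ = g x₂ →
      (QuotientAddGroup.mk' (pMul p W).range) w₁ =
        (QuotientAddGroup.mk' (pMul p W).range) w₂ := by
    intro w₁ w₂ x₁ x₂ h1 h2 h3
    obtain ⟨u, hu⟩ := (hfg (x₂ - x₁)).mp (by rw [map_sub, h3, sub_self])
    have hw : w₂ - w₁ = p • u := by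
      apply hf
      rw [map_sub, h1, h2, map_nsmul, hu, smul_sub]
    refine (QuotientAddGroup.mk'_eq_mk' _).mpr ⟨w₂ - w₁, ?_, by abel⟩
    exact (hpW _).mpr ⟨u, hw.symm⟩
  set δ : ↥(pTors p C) →+ (W ⧸ (pMul p W).range) :=
    AddMonoidHom.mk' (fun c => QuotientAddGroup.mk' (pMul p W).range (wsel c).1)
      (by
        intro c₁ c₂
        have h12 := hwsel (c₁ + c₂)
        have h1 := hwsel c₁
        have h2 := hwsel c₂
        have heq : (QuotientAddGroup.mk' (pMul p W).range) (wsel (c₁ + c₂)).1 =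
            (QuotientAddGroup.mk' (pMul p W).range) ((wsel c₁).1 + (wsel c₂).1) := by
          refine hmkeq _ _ (wsel (c₁ + c₂)).2 ((wsel c₁).2 + (wsel c₂).2) h12.2 ?_ ?_
          · rw [map_add, h1.2, h2.2, smul_add]
          · rw [map_add, h1.1, h2.1, h12.1]; rfl
        show (QuotientAddGroup.mk' (pMul p W).range) (wsel (c₁ + c₂)).1 =
            (QuotientAddGroup.mk' (pMul p W).range) (wsel c₁).1 +
              (QuotientAddGroup.mk' (pMul p W).range) (wsel c₂).1
        rw [heq, map_add]) with hδdef
  have hδapp : ∀ c, δ c = QuotientAddGroup.mk' (pMul p W).range (wsel c).1 := fun _ => rfl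
  -- kernel of γ = range of φ
  have hkerγ : γ.ker = φ.range := by
    ext x
    constructor
    · intro hx
      have hx0 : g x.1 = 0 := congrArg Subtype.val hx
      obtain ⟨w, hw⟩ := (hfg x.1).mp hx0
      have hwt : w ∈ pTors p W := by
        show p • w = 0
        apply hf
        rw [map_nsmul, hw, x.2, map_zero]
      exact ⟨⟨w, hwt⟩, Subtype.ext hw⟩
    · rintro ⟨w, rfl⟩
      have : g (f w.1) = 0 := hfg.apply_apply_eq_zero w.1
      exact Subtype.ext this
  -- kernel of γ' = range of φ'
  have hkerγ' : γ'.ker = φ'.range := by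
    ext y
    constructor
    · intro hy
      have hy0 : g' y.1 = 0 := hy
      obtain ⟨c, hc⟩ := (hfg' y.1).mp hy0
      have hct : c ∈ pTors p C := by
        show p • c = 0
        apply hf'
        rw [map_nsmul, hc, y.2, map_zero]
      exact ⟨⟨c, hct⟩, Subtype.ext hc⟩
    · rintro ⟨c, rfl⟩
      exact hfg'.apply_apply_eq_zero c.1
  -- kernel of δ = range of γ
  have hkerδ : δ.ker = γ.range := by
    ext c
    constructor
    · intro hc
      have hc0 : (QuotientAddGroup.mk' (pMul p W).range) (wsel c).1 = 0 := hc
      have : (wsel c).1 ∈ (pMul p W).range := by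
        rwa [QuotientAddGroup.mk'_apply, QuotientAddGroup.eq_zero_iff] at hc0
      obtain ⟨u, hu⟩ := (hpW _).mp this
      have hts : p • ((wsel c).2 - f u) = 0 := by
        rw [smul_sub, ← (hwsel c).2, ← map_nsmul, hu]
        exact sub_self _
      refine ⟨⟨(wsel c).2 - f u, hts⟩, Subtype.ext ?_⟩
      show g ((wsel c).2 - f u) = c.1
      rw [map_sub, (hwsel c).1, hfg.apply_apply_eq_zero, sub_zero]
    · rintro ⟨t, rfl⟩
      have ht : p • t.1 = 0 := t.2
      show (QuotientAddGroup.mk' (pMul p W).range) (wsel (γ t)).1 = 0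
      have hgt : (γ t).1 = g t.1 := rfl
      obtain ⟨u, hu⟩ := (hfg ((wsel (γ t)).2 - t.1)).mp
        (by rw [map_sub, (hwsel (γ t)).1, hgt, sub_self])
      have hw : (wsel (γ t)).1 = p • u := by
        apply hf
        rw [(hwsel (γ t)).2, map_nsmul, hu, smul_sub, ht, sub_zero]
      rw [QuotientAddGroup.mk'_apply, QuotientAddGroup.eq_zero_iff]
      exact (hpW _).mpr ⟨u, hw.symm⟩
  -- range of δ as a set
  have hrangeδ : ((δ.range : AddSubgroup (W ⧸ (pMul p W).range)) : Set (W ⧸ (pMul p W).range)) =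
      ⇑(QuotientAddGroup.mk' (pMul p W).range) '' {w : W | ∃ x : X, f w = p • x} := by
    ext q
    constructor
    · rintro ⟨c, rfl⟩
      exact ⟨(wsel c).1, ⟨(wsel c).2, (hwsel c).2⟩, rfl⟩
    · rintro ⟨w, ⟨x, hx⟩, rfl⟩
      have hct : g x ∈ pTors p C := by
        show p • g x = 0
        rw [← map_nsmul, ← hx, hfg.apply_apply_eq_zero]
      refine ⟨⟨g x, hct⟩, ?_⟩
      rw [hδapp]
      exact hmkeq _ _ _ _ (hwsel ⟨g x, hct⟩).2 hx (hwsel ⟨g x, hct⟩).1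
  -- range of γ' as a set
  have hrangeγ' : ((γ'.range : AddSubgroup Z) : Set Z) = ⇑g' '' (pTors p Y : Set Y) := by
    ext z
    constructor
    · rintro ⟨y, rfl⟩
      exact ⟨y.1, y.2, rfl⟩
    · rintro ⟨y, hy, rfl⟩
      exact ⟨⟨y, hy⟩, rfl⟩
  -- injectivity
  have hφinj : Function.Injective φ := by
    intro a b hab
    have : f a.1 = f b.1 := congrArg Subtype.val hab
    exact Subtype.ext (hf this)
  have hφ'inj : Function.Injective φ' := by
    intro a b hab
    have : f' a.1 = f' b.1 := congrArg Subtype.val hab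
    exact Subtype.ext (hf' this)
  -- card identities
  have h1 : Nat.card ↥(pTors p X) = Nat.card ↥γ.ker * Nat.card ↥γ.range :=
    aux_card_ker_mul_card_range γ
  have h2 : Nat.card ↥γ.ker = Nat.card ↥(pTors p W) := by
    rw [hkerγ]
    exact (Nat.card_congr (AddMonoidHom.ofInjective hφinj).toEquiv).symm
  have h3 : Nat.card ↥(pTors p C) = Nat.card ↥δ.ker * Nat.card ↥δ.range :=
    aux_card_ker_mul_card_range δ
  have h4 : Nat.card ↥δ.ker = Nat.card ↥γ.range := by rw [hkerδ]
  have h5 : Nat.card ↥(pTors p Y) = Nat.card ↥γ'.ker * Nat.card ↥γ'.range :=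
    aux_card_ker_mul_card_range γ'
  have h6 : Nat.card ↥γ'.ker = Nat.card ↥(pTors p C) := by
    rw [hkerγ']
    exact (Nat.card_congr (AddMonoidHom.ofInjective hφ'inj).toEquiv).symm
  -- the master counting identity
  have hmaster : Nat.card ↥(pTors p X) * Nat.card ↥δ.range * Nat.card ↥γ'.range =
      Nat.card ↥(pTors p W) * Nat.card ↥(pTors p Y) := by
    rw [h1, h2, h5, h6, h3, ← h4]
    ring
  -- finiteness of γ'.range
  have hγ'fin : Finite ↥γ'.range :=
    Finite.of_surjective _ γ'.rangeRestrict_surjective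
  -- everything is killed by p
  have hquot : ∀ q : W ⧸ (pMul p W).range, p • q = 0 := by
    intro q
    induction q using QuotientAddGroup.induction_on with
    | H w =>
      have : ((p • w : W) : W ⧸ (pMul p W).range) = 0 :=
        (QuotientAddGroup.eq_zero_iff _).mpr ((hpW _).mpr ⟨w, rfl⟩)
      rw [← this]
      rfl
  have hTkill : ∀ q : ↥δ.range, p • q = 0 := by
    intro q
    ext
    push_cast
    exact hquot q.1
  have hQkill : ∀ z : ↥γ'.range, p • z = 0 := by
    intro z
    ext
    push_cast
    obtain ⟨y, hy⟩ := z.2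
    show p • z.1 = 0
    rw [← hy, hγ'def]
    show p • g' y.1 = 0
    rw [← map_nsmul, y.2, map_zero]
  have hXkill : ∀ x : ↥(pTors p X), p • x = 0 := fun x => Subtype.ext (by
    show p • x.1 = 0
    exact x.2)
  have hYkill : ∀ x : ↥(pTors p Y), p • x = 0 := fun x => Subtype.ext x.2
  have hWkill : ∀ x : ↥(pTors p W), p • x = 0 := fun x => Subtype.ext x.2
  -- p-power forms
  have hX : Nat.card ↥(pTors p X) = p ^ pRank p X := aux_card_pow p _ hXkill
  have hY : Nat.card ↥(pTors p Y) = p ^ pRank p Y := aux_card_pow p _ hYkill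
  have hW : Nat.card ↥(pTors p W) = p ^ pRank p W := aux_card_pow p _ hWkill
  have hT : Nat.card ↥δ.range = p ^ Nat.log p (Nat.card ↥δ.range) :=
    aux_card_pow p _ hTkill
  have hQ : Nat.card ↥γ'.range = p ^ Nat.log p (Nat.card ↥γ'.range) :=
    aux_card_pow p _ hQkill
  -- rewrite the goal's cards
  have hTcard : Nat.card
      (⇑(QuotientAddGroup.mk' (pMul p W).range) '' {w : W | ∃ x : X, f w = p • x}) =
      Nat.card ↥δ.range := by
    rw [← hrangeδ]
    rfl
  have hQcard : Nat.card (⇑g' '' (pTors p Y : Set Y)) = Nat.card ↥γ'.range := by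
    rw [← hrangeγ']
    rfl
  rw [hTcard, hQcard]
  -- finish with pow injectivity
  have hpow : p ^ (pRank p X + Nat.log p (Nat.card ↥δ.range)
        + Nat.log p (Nat.card ↥γ'.range)) =
      p ^ (pRank p W + pRank p Y) := by
    rw [pow_add, pow_add, pow_add, ← hX, ← hT, ← hQ, ← hW, ← hY]
    exact hmaster
  have := Nat.pow_right_injective hp1 hpow
  omega
end

section
/- Let F be a number field, p an odd prime, A an abelian variety over F with A[p] ⊆ A(F), and S a finite set of places containing the places above p, the bad reduction places, and the archimedean places. Then the p-fine Selmer group satisfies R_S(A[p]/F) = Hom(Cl_S(F), A[p]) ≅ Cl_S(F)[p]^{2d} as abelian groups, where d = dim A; in particular r_p(R_S(A[p]/F)) = 2d · r_p(Cl_S(F)). -/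
/-- The multiplicative group structure (composition) on `AddAut M` that older Mathlib provided. -/
instance addAutGroupOld (M : Type*) [Add M] : Group (AddAut M) where
  mul g h := AddEquiv.trans h g
  one := AddEquiv.refl _
  inv := AddEquiv.symm
  mul_assoc _ _ _ := rfl
  one_mul _ := rfl
  mul_one _ := rfl
  inv_mul_cancel := AddEquiv.self_trans_symm

section Cohomology

variable {G : Type*} [Group G] {M : Type*} [AddCommGroup M]

/-- 1-cocycles of `G` with coefficients in `M`, for the action `ρ`. -/
def cocycles (ρ : G →* AddAut M) : AddSubgroup (G → M) where
  carrier := {f | ∀ g h : G, f (g * h) = f g + ρ g (f h)}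
  zero_mem' := by intro g h; simp
  add_mem' := by
    intro a b ha hb g h
    simp only [Pi.add_apply, ha g h, hb g h, map_add]
    abel
  neg_mem' := by
    intro a ha g h
    simp only [Pi.neg_apply, ha g h, map_neg]
    abel

/-- 1-coboundaries inside the 1-cocycles. -/
def coboundaries (ρ : G →* AddAut M) : AddSubgroup ↥(cocycles ρ) where
  carrier := {f | ∃ m : M, ∀ g : G, (f : G → M) g = ρ g m - m}
  zero_mem' := ⟨0, by simp⟩
  add_mem' := by
    rintro a b ⟨m, hm⟩ ⟨m', hm'⟩
    refine ⟨m + m', fun g => ?_⟩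
    simp only [AddSubgroup.coe_add, Pi.add_apply, hm g, hm' g, map_add]
    abel
  neg_mem' := by
    rintro a ⟨m, hm⟩
    refine ⟨-m, fun g => ?_⟩
    simp only [AddSubgroup.coe_neg, Pi.neg_apply, hm g, map_neg]
    abel

/-- First group cohomology `H¹(G, M)` (cocycles modulo coboundaries). -/
abbrev H1 (ρ : G →* AddAut M) := ↥(cocycles ρ) ⧸ coboundaries ρ

/-- Restriction of 1-cocycles to a subgroup `H ≤ G`. -/
def resCocycle (ρ : G →* AddAut M) (H : Subgroup G) :
    ↥(cocycles ρ) →+ ↥(cocycles (ρ.comp H.subtype)) where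
  toFun f := ⟨fun h => (f : G → M) h, fun g h => f.2 g.1 h.1⟩
  map_zero' := rfl
  map_add' _ _ := rfl

/-- The restriction map `H¹(G, M) → H¹(H, M)`. -/
def resH1 (ρ : G →* AddAut M) (H : Subgroup G) :
    H1 ρ →+ H1 (ρ.comp H.subtype) :=
  QuotientAddGroup.map _ _ (resCocycle ρ H) (by
    rintro f ⟨m, hm⟩
    exact ⟨m, fun g => hm g.1⟩)

/-- The fine Selmer group attached to the local conditions given by the family of
subgroups `D i` (the decomposition subgroups at the places `i ∈ S`): the kernel of the
localization map `H¹(G, M) → ∏_{i ∈ S} H¹(D i, M)`. -/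
def fineSelmer (ρ : G →* AddAut M) {ι : Type*} (D : ι → Subgroup G) :
    AddSubgroup (H1 ρ) :=
  ⨅ i, (resH1 ρ (D i)).ker

/-- The invariants `M^G`. -/
def invar (ρ : G →* AddAut M) : AddSubgroup M where
  carrier := {m | ∀ g, ρ g m = m}
  zero_mem' := fun g => map_zero _
  add_mem' := fun ha hb g => by rw [map_add, ha g, hb g]
  neg_mem' := fun ha g => by rw [map_neg, ha g]

end Cohomology

section TrivialAction

variable {G : Type*} [Group G] {M : Type*} [AddCommGroup M]

theorem H1_mk_eq_zero_iff_of_trivial {ρ : G →* AddAut M} (hρ : ∀ g m, ρ g m = m)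
    (f : cocycles ρ) : (QuotientAddGroup.mk f : H1 ρ) = 0 ↔ f = 0 := by
  rw [QuotientAddGroup.eq_zero_iff]
  refine ⟨fun ⟨m, hm⟩ => Subtype.ext (funext fun g => by rw [hm g, hρ, sub_self]; rfl), ?_⟩
  rintro rfl
  exact zero_mem _

theorem mk_mem_fineSelmer_one_iff {ι : Type*} (D : ι → Subgroup G)
    (f : cocycles (1 : G →* AddAut M)) :
    (QuotientAddGroup.mk f : H1 (1 : G →* AddAut M)) ∈ fineSelmer 1 D ↔
      ∀ i, ∀ g ∈ D i, (f : G → M) g = 0 := by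
  simp only [fineSelmer, AddSubgroup.mem_iInf, AddMonoidHom.mem_ker]
  refine forall_congr' fun i => ?_
  change (QuotientAddGroup.mk (resCocycle 1 (D i) f) : H1 _) = 0 ↔ _
  rw [H1_mk_eq_zero_iff_of_trivial fun _ _ => rfl]
  simp [Subtype.ext_iff, funext_iff, resCocycle]

def cocyclesOneToMonoidHom (f : cocycles (1 : G →* AddAut M)) : G →* Multiplicative M :=
  MonoidHom.mk' (fun g => Multiplicative.ofAdd ((f : G → M) g))
    fun g h => congrArg Multiplicative.ofAdd (f.2 g h)

end TrivialAction

theorem Subgroup.normalClosure_union_commutators_le_ker {G A : Type*} [Group G] [CommGroup A]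
    (φ : G →* A) {S : Set G} (hS : S ⊆ φ.ker) :
    Subgroup.normalClosure (S ∪ {x | ∃ a b : G, x = a * b * a⁻¹ * b⁻¹}) ≤ φ.ker := by
  apply Subgroup.normalClosure_le_normal
  rintro x (hx | ⟨a, b, rfl⟩)
  · exact hS hx
  · simp [MonoidHom.mem_ker]

section FineSelmerOne

variable {G : Type*} [Group G] {ι : Type*} (D : ι → Subgroup G) (M : Type*) [AddCommGroup M]

/-- `G ⧸ decompCommutatorClosure D` is the largest abelian quotient of `G` in which every `D i`
becomes trivial; for `G = G_S(F)` class field theory identifies it with `Cl_S(F)`. -/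
def decompCommutatorClosure : Subgroup G :=
  Subgroup.normalClosure ((⋃ i, (D i : Set G)) ∪ {x | ∃ a b : G, x = a * b * a⁻¹ * b⁻¹})

instance : (decompCommutatorClosure D).Normal := Subgroup.normalClosure_normal

theorem QuotientGroup.mk_decompCommutatorClosure_eq_one {i : ι} {g : G} (hg : g ∈ D i) :
    (g : G ⧸ decompCommutatorClosure D) = 1 :=
  (QuotientGroup.eq_one_iff g).2 <|
    Subgroup.subset_normalClosure (Or.inl (Set.mem_iUnion.2 ⟨i, hg⟩))

def cocycleOfHomQuotient (φ : Additive (G ⧸ decompCommutatorClosure D) →+ M) :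
    cocycles (1 : G →* AddAut M) :=
  ⟨fun g => φ (Additive.ofMul (g : G ⧸ _)), fun g h => map_add φ (Additive.ofMul (g : G ⧸ _))
    (Additive.ofMul (h : G ⧸ _))⟩

def homToFineSelmer :
    (Additive (G ⧸ decompCommutatorClosure D) →+ M) →+ fineSelmer (1 : G →* AddAut M) D where
  toFun φ := ⟨QuotientAddGroup.mk (cocycleOfHomQuotient D M φ),
    (mk_mem_fineSelmer_one_iff D _).2 fun i g hg => by
      show φ (Additive.ofMul (g : G ⧸ _)) = 0
      rw [QuotientGroup.mk_decompCommutatorClosure_eq_one D hg, ofMul_one, map_zero]⟩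
  map_zero' := rfl
  map_add' _ _ := rfl

theorem homToFineSelmer_injective : Function.Injective (homToFineSelmer D M) := by
  rw [injective_iff_map_eq_zero]
  intro φ hφ
  have hcocycle := (H1_mk_eq_zero_iff_of_trivial (ρ := 1) (fun _ _ => rfl)
    (cocycleOfHomQuotient D M φ)).1 (congrArg Subtype.val hφ)
  ext g
  exact congrFun (congrArg Subtype.val hcocycle) g

theorem homToFineSelmer_surjective : Function.Surjective (homToFineSelmer D M) := by
  rintro ⟨x, hx⟩
  obtain ⟨f, rfl⟩ := QuotientAddGroup.mk_surjective x
  have hD := (mk_mem_fineSelmer_one_iff D f).1 hx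
  have hker : decompCommutatorClosure D ≤ (cocyclesOneToMonoidHom f).ker :=
    Subgroup.normalClosure_union_commutators_le_ker _ <| by
      rintro g ⟨_, ⟨i, rfl⟩, hg⟩
      exact congrArg Multiplicative.ofAdd (hD i g hg)
  exact ⟨MonoidHom.toAdditiveLeft (QuotientGroup.lift _ _ hker),
    Subtype.ext (congrArg _ (Subtype.ext rfl))⟩

noncomputable def homQuotientEquivFineSelmer :
    (Additive (G ⧸ decompCommutatorClosure D) →+ M) ≃+ fineSelmer (1 : G →* AddAut M) D :=
  AddEquiv.ofBijective (homToFineSelmer D M)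
    ⟨homToFineSelmer_injective D M, homToFineSelmer_surjective D M⟩

end FineSelmerOne

def addMonoidHomPiEquiv (A : Type*) [AddZeroClass A] {κ : Type*} (N : κ → Type*)
    [∀ k, AddCommMonoid (N k)] : (A →+ ∀ k, N k) ≃+ ∀ k, A →+ N k where
  toFun φ k := (Pi.evalAddMonoidHom N k).comp φ
  invFun := AddMonoidHom.pi
  left_inv _ := rfl
  right_inv _ := rfl
  map_add' _ _ := rfl

section PTorsion

variable (p : ℕ)

instance pTors.instModuleZMod (A : Type*) [AddCommGroup A] : Module (ZMod p) (pTors p A) :=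
  AddCommGroup.zmodModule fun x => Subtype.ext x.2

theorem card_quotient_range_pMul (A : Type*) [AddCommGroup A] [Finite A] :
    Nat.card (A ⧸ (pMul p A).range) = Nat.card (pTors p A) := by
  rw [← AddSubgroup.index_eq_card, AddSubgroup.index_range]
  rfl

theorem card_addMonoidHom_zmod_of_module [Fact p.Prime] (V : Type*) [AddCommGroup V]
    [Module (ZMod p) V] [Finite V] : Nat.card (V →+ ZMod p) = Nat.card V := by
  rw [Nat.card_congr (AddMonoidHom.toZModLinearMapEquiv p).toEquiv,
    Module.natCard_eq_pow_finrank (K := ZMod p),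
    Module.natCard_eq_pow_finrank (K := ZMod p) (V := V), Subspace.dual_finrank_eq]

def addMonoidHomQuotientEquiv {A B : Type*} [AddCommGroup A] [AddCommGroup B]
    (R : AddSubgroup A) (hR : ∀ f : A →+ B, R ≤ f.ker) : (A ⧸ R →+ B) ≃ (A →+ B) where
  toFun f := f.comp (QuotientAddGroup.mk' R)
  invFun f := QuotientAddGroup.lift R f (hR f)
  left_inv f := by ext; rfl
  right_inv f := by ext; rfl

theorem card_addMonoidHom_zmod [Fact p.Prime] (A : Type*) [AddCommGroup A] [Finite A] :
    Nat.card (A →+ ZMod p) = Nat.card (pTors p A) := by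
  let _ : Module (ZMod p) (A ⧸ (pMul p A).range) :=
    QuotientAddGroup.zmodModule fun x => ⟨x, rfl⟩
  have hR (f : A →+ ZMod p) : (pMul p A).range ≤ f.ker := by
    rintro _ ⟨x, rfl⟩
    exact (map_nsmul f p x).trans (ZModModule.char_nsmul_eq_zero p (f x))
  rw [← Nat.card_congr (addMonoidHomQuotientEquiv _ hR), card_addMonoidHom_zmod_of_module,
    card_quotient_range_pMul]

theorem nonempty_linearEquiv_of_natCard_eq {K V W : Type*} [Field K] [Finite K]
    [AddCommGroup V] [Module K V] [Finite V] [AddCommGroup W] [Module K W] [Finite W]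
    (h : Nat.card V = Nat.card W) : Nonempty (V ≃ₗ[K] W) := by
  rw [Module.natCard_eq_pow_finrank (K := K),
    Module.natCard_eq_pow_finrank (K := K) (V := W)] at h
  exact FiniteDimensional.nonempty_linearEquiv_of_finrank_eq
    (Nat.pow_right_injective Finite.one_lt_card h)

theorem nonempty_addMonoidHom_zmod_addEquiv_pTors [Fact p.Prime] (A : Type*) [AddCommGroup A]
    [Finite A] : Nonempty ((A →+ ZMod p) ≃+ pTors p A) :=
  have : Finite (A →+ ZMod p) := Finite.of_injective _ DFunLike.coe_injective
  (nonempty_linearEquiv_of_natCard_eq (K := ZMod p) (card_addMonoidHom_zmod p A)).map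
    LinearEquiv.toAddEquiv

theorem card_pTors_eq_pow_pRank [Fact p.Prime] (N : Type*) [AddCommGroup N] [Finite N] :
    Nat.card (pTors p N) = p ^ pRank p N := by
  rw [pRank, Module.natCard_eq_pow_finrank (K := ZMod p), Nat.card_zmod,
    Nat.log_pow (Fact.out : p.Prime).one_lt]

theorem pRank_congr {N N' : Type*} [AddCommGroup N] [AddCommGroup N'] (e : N ≃+ N') :
    pRank p N = pRank p N' := by
  unfold pRank
  congr 1
  refine Nat.card_congr (e.toEquiv.subtypeEquiv fun x => ?_)
  change p • x = 0 ↔ p • e x = 0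
  rw [← map_nsmul, AddEquiv.map_eq_zero_iff]

theorem pRank_pi [Fact p.Prime] {κ : Type*} [Finite κ] (N : Type*) [AddCommGroup N] [Finite N] :
    pRank p (κ → N) = Nat.card κ * pRank p N := by
  have hcard : Nat.card (pTors p (κ → N)) = p ^ (pRank p N * Nat.card κ) := by
    rw [pow_mul, ← card_pTors_eq_pow_pRank, ← Nat.card_fun]
    exact Nat.card_congr ((Equiv.subtypeEquivRight (q := fun f : κ → N => ∀ k, f k ∈ pTors p N)
      fun _ => funext_iff).trans Equiv.subtypePiEquivPi)
  rw [pRank, hcard, Nat.log_pow (Fact.out : p.Prime).one_lt, mul_comm]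

theorem pRank_pTors (N : Type*) [AddCommGroup N] : pRank p (pTors p N) = pRank p N := by
  have htop : pTors p (pTors p N) = ⊤ := eq_top_iff.2 fun x _ => Subtype.ext x.2
  rw [pRank, pRank, htop, Nat.card_congr AddSubgroup.topEquiv.toEquiv]

end PTorsion

theorem pFineSelmer_eq_hom_classGroup_general (p : ℕ) [Fact p.Prime] (d : ℕ)
    {G : Type} [Group G]
    {ι : Type} (D : ι → Subgroup G)
    (C : Type) [CommGroup C] [Finite C]
    (clIso : (G ⧸ Subgroup.normalClosure
        ((⋃ i, (D i : Set G)) ∪ {x | ∃ a b : G, x = a * b * a⁻¹ * b⁻¹})) ≃* C) :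
    Nonempty (↥(fineSelmer (1 : G →* AddAut (Fin (2 * d) → ZMod p)) D) ≃+
        (Additive C →+ (Fin (2 * d) → ZMod p))) ∧
    Nonempty (↥(fineSelmer (1 : G →* AddAut (Fin (2 * d) → ZMod p)) D) ≃+
        (Fin (2 * d) → ↥(pTors p (Additive C)))) ∧
    pRank p ↥(fineSelmer (1 : G →* AddAut (Fin (2 * d) → ZMod p)) D)
      = 2 * d * pRank p (Additive C) := by
  let eHom : fineSelmer (1 : G →* AddAut (Fin (2 * d) → ZMod p)) D ≃+
      (Additive C →+ (Fin (2 * d) → ZMod p)) :=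
    (homQuotientEquivFineSelmer D _).symm.trans
      (AddEquiv.addMonoidHomCongrLeft (MulEquiv.toAdditive clIso))
  obtain ⟨eDual⟩ := nonempty_addMonoidHom_zmod_addEquiv_pTors p (Additive C)
  let eTors := eHom.trans ((addMonoidHomPiEquiv _ _).trans (AddEquiv.piCongrRight fun _ => eDual))
  refine ⟨⟨eHom⟩, ⟨eTors⟩, ?_⟩
  rw [pRank_congr p eTors, pRank_pi, Nat.card_fin, pRank_pTors]

/-- Suppose `A[p] ⊆ A(F)`, so that `G = G_S(F)` acts trivially on
`A[p] ≅ (ℤ/p)^{2d}`.  Let `D i` be the decomposition subgroups at the places of `S`,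
and let `N` be the normal closure of the subgroup generated by all `D i` together with
all commutators; by class field theory `G/N ≅ Gal(H_S/F) ≅ Cl_S(F)` (`p`-part), which
is the finite (`p`-)group `C`.  Then the `p`-fine Selmer group satisfies
`R_S(A[p]/F) = Hom(Cl_S(F), A[p]) ≅ Cl_S(F)[p]^{2d}` and
`r_p(R_S(A[p]/F)) = 2d · r_p(Cl_S(F))`. -/
theorem pFineSelmer_eq_hom_classGroup (p : ℕ) [Fact p.Prime] (hodd : Odd p) (d : ℕ)
    {G : Type} [Group G]
    {ι : Type} [Finite ι] (D : ι → Subgroup G)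
    (C : Type) [CommGroup C] [Finite C] (hCp : IsPGroup p C)
    (clIso : (G ⧸ Subgroup.normalClosure
        ((⋃ i, (D i : Set G)) ∪ {x | ∃ a b : G, x = a * b * a⁻¹ * b⁻¹})) ≃* C) :
    Nonempty (↥(fineSelmer (1 : G →* AddAut (Fin (2 * d) → ZMod p)) D) ≃+
        (Additive C →+ (Fin (2 * d) → ZMod p))) ∧
    Nonempty (↥(fineSelmer (1 : G →* AddAut (Fin (2 * d) → ZMod p)) D) ≃+
        (Fin (2 * d) → ↥(pTors p (Additive C)))) ∧
    pRank p ↥(fineSelmer (1 : G →* AddAut (Fin (2 * d) → ZMod p)) D)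
      = 2 * d * pRank p (Additive C) :=
  pFineSelmer_eq_hom_classGroup_general p d D C clIso
end

section
/- Let A be an abelian variety over a number field L and p an odd prime. Define the fine Mordell–Weil group M_{p^∞}(A/L) = ker(A(L) ⊗ ℚ_p/ℤ_p → ⊕_{v|p} A(L_v) ⊗ ℚ_p/ℤ_p). Then M_{p^∞}(A/L) injects into the fine Selmer group R_{p^∞}(A/L) (compatibly with the inclusions into Sel_{p^∞}(A/L)), and the quotient Ж_{p^∞}(A/L) := R_{p^∞}(A/L)/M_{p^∞}(A/L) (the fine Shafarevich–Tate group) injects into the p-primary Shafarevich–Tate group Ш(A/L)[p^∞]. -/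
/-- Let `A` be an abelian variety over a number field `L` and `p` an
odd prime.  Below, `AQ` stands for `A(L) ⊗ ℚ_p/ℤ_p`, `Sel` for `Sel_{p^∞}(A/L)`, `Sha`
for `Ш(A/L)[p^∞]` (with the exact sequence `0 → AQ → Sel → Sha → 0`), `Loc` for
`⊕_{v ∣ p} A(L_v) ⊗ ℚ_p/ℤ_p`, `loc : Sel → Loc` for the map of Lemma `indep of S`
(whose kernel is the fine Selmer group `R_{p^∞}(A/L)`), and `locA : AQ → Loc` for the
natural localization map, whose kernel is the fine Mordell–Weil group
`M_{p^∞}(A/L)`.  Then `M_{p^∞}(A/L) = R_{p^∞}(A/L) ∩ AQ` inside `Sel` (so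
`M_{p^∞}(A/L)` injects into `R_{p^∞}(A/L)` compatibly), and the fine Šafarevič–Tate
group `Ж_{p^∞}(A/L) = R_{p^∞}(A/L)/M_{p^∞}(A/L)` injects into `Ш(A/L)[p^∞]`. -/
theorem fineSha_injects_into_Sha (p : ℕ) [Fact p.Prime] (hodd : Odd p)
    {AQ Sel Sha Loc : Type}
    [AddCommGroup AQ] [AddCommGroup Sel] [AddCommGroup Sha] [AddCommGroup Loc]
    (i : AQ →+ Sel) (π : Sel →+ Sha)
    (hi : Function.Injective i) (hπ : Function.Surjective π)
    (hexact : Function.Exact ⇑i ⇑π)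
    (loc : Sel →+ Loc) (locA : AQ →+ Loc)
    (hcomp : ∀ a, loc (i a) = locA a) :
    (∀ a : AQ, a ∈ locA.ker → i a ∈ loc.ker) ∧
    (∀ a : AQ, i a ∈ loc.ker → a ∈ locA.ker) ∧
    (∀ x ∈ loc.ker, π x = 0 → ∃ a ∈ locA.ker, i a = x) ∧
    ∃ j : (↥loc.ker ⧸ (locA.ker.map i).addSubgroupOf loc.ker) →+ Sha,
      Function.Injective j ∧
      ∀ x : ↥loc.ker, j (QuotientAddGroup.mk x) = π ↑x := by
  have h1 : ∀ a : AQ, a ∈ locA.ker → i a ∈ loc.ker := by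
    intro a ha
    simp only [AddMonoidHom.mem_ker] at ha ⊢
    rw [hcomp]; exact ha
  have h2 : ∀ a : AQ, i a ∈ loc.ker → a ∈ locA.ker := by
    intro a ha
    simp only [AddMonoidHom.mem_ker] at ha ⊢
    rw [← hcomp]; exact ha
  have h3 : ∀ x ∈ loc.ker, π x = 0 → ∃ a ∈ locA.ker, i a = x := by
    intro x hx hπx
    obtain ⟨a, ha⟩ := (hexact x).mp hπx
    exact ⟨a, h2 a (ha ▸ hx), ha⟩
  refine ⟨h1, h2, h3, ?_⟩
  have hker : (locA.ker.map i).addSubgroupOf loc.ker ≤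
      (π.comp loc.ker.subtype).ker := by
    rintro ⟨x, hx⟩ hmem
    simp only [AddSubgroup.mem_addSubgroupOf, AddSubgroup.mem_map] at hmem
    obtain ⟨a, ha, hax⟩ := hmem
    simp only [AddMonoidHom.mem_ker, AddMonoidHom.comp_apply,
      AddSubgroup.coe_subtype]
    rw [← hax]
    exact (hexact (i a)).mpr ⟨a, rfl⟩
  refine ⟨QuotientAddGroup.lift _ (π.comp loc.ker.subtype) hker, ?_, fun x => rfl⟩
  rw [injective_iff_map_eq_zero]
  intro q hq
  induction q using QuotientAddGroup.induction_on with
  | H x =>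
    rw [QuotientAddGroup.lift_mk'] at hq
    simp only [AddMonoidHom.comp_apply, AddSubgroup.coe_subtype] at hq
    obtain ⟨a, ha, hax⟩ := h3 x x.2 hq
    rw [QuotientAddGroup.eq_zero_iff]
    exact AddSubgroup.mem_addSubgroupOf.mpr ⟨a, ha, hax⟩
end
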